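/- Let G be a second countable topological group acting continuously by isometries on a nonempty complete CAT(0) space X (the action map G × X → X is continuous and each g ∈ G acts as an isometry of X). If the action is minimal, i.e. the only nonempty closed convex G-invariant subset of X is X itself, then X is a separable metric space. -/

import Mathlib

/-- `m` is a midpoint of `x` and `y`. -/
def IsMidpoint {X : Type*} [MetricSpace X] (x y m : X) : Prop :=
  dist x m = dist x y / 2 ∧ dist y m = dist x y / 2

/-- A complete metric space is CAT(0) if midpoints exist and the
Bruhat–Tits inequality holds. -/
def IsCAT0 (X : Type*) [MetricSpace X] : Prop :=
  (∀ x y : X, ∃ m : X, IsMidpoint x y m) ∧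
  ∀ x y z m : X, IsMidpoint x y m →
    dist z m ^ 2 ≤ dist z x ^ 2 / 2 + dist z y ^ 2 / 2 - dist x y ^ 2 / 4

/-- A subset is convex if it contains every midpoint of any two of its points. -/
def ConvexSubset {X : Type*} [MetricSpace X] (C : Set X) : Prop :=
  ∀ x ∈ C, ∀ y ∈ C, ∀ m : X, IsMidpoint x y m → m ∈ C

/-! Fix a countable dense set `D ⊆ G` and a point `x₀`. A countable set `T` contains `x₀` and
is closed under midpoints and under `x ↦ d • x` for `d ∈ D`. Its closure is convex, since
midpoints are unique and, by the Bruhat–Tits inequality, depend continuously on their endpoints;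
and it is `G`-invariant, since `G = closure D` acts continuously. By minimality `closure T = X`. -/

open Set Function
open scoped Pointwise

theorem Set.Countable.exists_superset_image2_subset_mapsTo {α ι : Type*} [Countable ι]
    (f : α → α → α) (φ : ι → α → α) {S : Set α} (hS : S.Countable) :
    ∃ T, S ⊆ T ∧ T.Countable ∧ Set.image2 f T T ⊆ T ∧ ∀ i, MapsTo (φ i) T T := by
  let step : Set α → Set α := fun s => s ∪ Set.image2 f s s ∪ ⋃ i, φ i '' s
  let A : ℕ → Set α := fun n => step^[n] S
  have hA : ∀ n, A (n + 1) = step (A n) := fun n => iterate_succ_apply' step n S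
  have hmono : Monotone A := monotone_nat_of_le_succ fun n => by
    rw [hA]; exact subset_union_left.trans subset_union_left
  refine ⟨⋃ n, A n, subset_iUnion A 0, countable_iUnion fun n => ?_, ?_, fun i => ?_⟩
  · induction n with
    | zero => exact hS
    | succ n ih =>
      rw [hA]
      exact (ih.union (ih.image2 ih f)).union (countable_iUnion fun i => ih.image _)
  · rintro _ ⟨a, ha, b, hb, rfl⟩
    obtain ⟨i, hi⟩ := mem_iUnion.1 ha
    obtain ⟨j, hj⟩ := mem_iUnion.1 hb
    refine mem_iUnion.2 ⟨max i j + 1, ?_⟩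
    rw [hA]
    exact .inl (.inr (mem_image2_of_mem (hmono (le_max_left i j) hi)
      (hmono (le_max_right i j) hj)))
  · intro a ha
    obtain ⟨n, hn⟩ := mem_iUnion.1 ha
    refine mem_iUnion.2 ⟨n + 1, ?_⟩
    rw [hA]
    exact .inr (mem_iUnion.2 ⟨i, mem_image_of_mem _ hn⟩)

theorem smul_closure_eq_of_dense {G X : Type*} [Group G] [TopologicalSpace G]
    [TopologicalSpace X] [MulAction G X] [ContinuousSMul G X] {D : Set G} (hD : Dense D)
    {T : Set X} (hT : ∀ d ∈ D, MapsTo (d • ·) T T) (g : G) : g • closure T = closure T := by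
  have hsub : ∀ g : G, g • closure T ⊆ closure T := fun g =>
    calc g • closure T ⊆ closure (g • T) := smul_closure_subset g T
      _ ⊆ closure T := closure_minimal (by
          rintro _ ⟨x, hx, rfl⟩
          exact map_mem_closure (f := (· • x)) (continuous_id.smul continuous_const) (hD g)
            fun ⦃d⦄ hd => hT d hd hx) isClosed_closure
  exact (hsub g).antisymm (subset_smul_set_iff.2 (hsub g⁻¹))

namespace IsCAT0

variable {X : Type*} [MetricSpace X]

theorem eq_of_isMidpoint (hX : IsCAT0 X) {x y m m' : X} (hm : IsMidpoint x y m)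
    (hm' : IsMidpoint x y m') : m = m' := by
  have h := hX.2 x y m' m hm
  rw [dist_comm m' x, dist_comm m' y, hm'.1, hm'.2] at h
  exact (dist_le_zero.1 (by nlinarith [dist_nonneg (x := m') (y := m)])).symm

theorem dist_sq_le_of_isMidpoint (hX : IsCAT0 X) {x y x' y' m m' : X} (hm : IsMidpoint x y m)
    (hm' : IsMidpoint x' y' m') :
    dist m m' ^ 2 ≤ dist x' y' * (dist x x' + dist y y') + (dist x x' + dist y y') ^ 2 := by
  have hx : dist m' x ≤ dist x' y' / 2 + dist x x' := by
    linarith [dist_triangle m' x' x, dist_comm m' x', hm'.1, dist_comm x' x]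
  have hy : dist m' y ≤ dist x' y' / 2 + dist y y' := by
    linarith [dist_triangle m' y' y, dist_comm m' y', hm'.2, dist_comm y' y]
  have hxy : dist x' y' ^ 2 - dist x y ^ 2 ≤ 2 * dist x' y' * (dist x x' + dist y y') := by
    have := dist_triangle4 x' x y y'
    rw [dist_comm x' x] at this
    rcases le_total (dist x' y') (dist x y) with h | h
    · nlinarith [dist_nonneg (x := x') (y := y'), dist_nonneg (x := x) (y := x'),
        dist_nonneg (x := y) (y := y')]
    · nlinarith [dist_nonneg (x := x) (y := y)]
  calc dist m m' ^ 2
      ≤ dist m' x ^ 2 / 2 + dist m' y ^ 2 / 2 - dist x y ^ 2 / 4 :=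
        dist_comm m m' ▸ hX.2 x y m' m hm
    _ ≤ (dist x' y' / 2 + dist x x') ^ 2 / 2 + (dist x' y' / 2 + dist y y') ^ 2 / 2
          - dist x y ^ 2 / 4 := by gcongr
    _ ≤ dist x' y' * (dist x x' + dist y y') + (dist x x' + dist y y') ^ 2 := by
      nlinarith [mul_nonneg (dist_nonneg (x := x) (y := x')) (dist_nonneg (x := y) (y := y'))]

noncomputable def midpoint (hX : IsCAT0 X) (x y : X) : X := (hX.1 x y).choose

theorem isMidpoint_midpoint (hX : IsCAT0 X) (x y : X) : IsMidpoint x y (hX.midpoint x y) :=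
  (hX.1 x y).choose_spec

theorem continuous_midpoint (hX : IsCAT0 X) : Continuous (uncurry hX.midpoint) := by
  rw [continuous_iff_continuousAt]
  rintro ⟨x, y⟩
  let e : X × X → ℝ := fun q => dist q.1 x + dist q.2 y
  have hbound : ∀ q : X × X, dist (uncurry hX.midpoint q) (hX.midpoint x y) ≤
      √(dist x y * e q + e q ^ 2) := fun q =>
    Real.le_sqrt_of_sq_le (hX.dist_sq_le_of_isMidpoint (hX.isMidpoint_midpoint q.1 q.2)
      (hX.isMidpoint_midpoint x y))
  have hlim : Continuous fun q => √(dist x y * e q + e q ^ 2) := by fun_prop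
  refine tendsto_iff_dist_tendsto_zero.2 (squeeze_zero (fun _ => dist_nonneg) hbound ?_)
  simpa [e] using hlim.tendsto (x, y)

theorem convexSubset_closure (hX : IsCAT0 X) {T : Set X} (hT : image2 hX.midpoint T T ⊆ T) :
    ConvexSubset (closure T) := by
  intro x hx y hy m hm
  rw [hX.eq_of_isMidpoint hm (hX.isMidpoint_midpoint x y)]
  exact map_mem_closure₂ hX.continuous_midpoint hx hy fun a ha b hb =>
    hT (mem_image2_of_mem ha hb)

end IsCAT0

theorem stmt12_general {G : Type*} [Group G] [TopologicalSpace G]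
    [SecondCountableTopology G]
    {X : Type*} [MetricSpace X] [Nonempty X]
    (hX : IsCAT0 X) [MulAction G X]
    -- the action map `G × X → X` is continuous
    (hcont : Continuous fun p : G × X => p.1 • p.2)
    -- the action is minimal
    (hmin : ∀ C : Set X, C.Nonempty → IsClosed C → ConvexSubset C →
      (∀ g : G, (fun x : X => g • x) '' C = C) → C = Set.univ) :
    TopologicalSpace.SeparableSpace X := by
  have : ContinuousSMul G X := ⟨hcont⟩
  obtain ⟨x₀⟩ := ‹Nonempty X›
  obtain ⟨D, hDc, hD⟩ := TopologicalSpace.exists_countable_dense G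
  have := hDc.to_subtype
  obtain ⟨T, hx₀, hTc, hTmid, hTD⟩ :=
    (Set.countable_singleton x₀).exists_superset_image2_subset_mapsTo hX.midpoint
      fun d : D => ((d : G) • ·)
  have hT : closure T = univ :=
    hmin _ ⟨x₀, subset_closure (hx₀ rfl)⟩ isClosed_closure (hX.convexSubset_closure hTmid)
      (smul_closure_eq_of_dense hD fun d hd => hTD ⟨d, hd⟩)
  exact ⟨T, hTc, dense_iff_closure_eq.2 hT⟩

theorem stmt12 {G : Type*} [Group G] [TopologicalSpace G] [IsTopologicalGroup G]
    [SecondCountableTopology G]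
    {X : Type*} [MetricSpace X] [CompleteSpace X] [Nonempty X]
    (hX : IsCAT0 X) [MulAction G X]
    -- the action map `G × X → X` is continuous
    (hcont : Continuous fun p : G × X => p.1 • p.2)
    -- each `g` acts as an isometry
    (hiso : ∀ g : G, Isometry fun x : X => g • x)
    -- the action is minimal
    (hmin : ∀ C : Set X, C.Nonempty → IsClosed C → ConvexSubset C →
      (∀ g : G, (fun x : X => g • x) '' C = C) → C = Set.univ) :
    TopologicalSpace.SeparableSpace X :=
  stmt12_general hX hcont hmin
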